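/- Let X₁ be a Rademacher random variable and X₂ an exponential random variable with rate 1, independent of X₁. Let X̂ = (X₁ + X₂)/√2, F_X̂ the cumulative distribution function of X̂, and Ŷ = F_X̂(X̂). Then cov(X₂, Ŷ)/cov(X₁, Ŷ) = (3 + e²)/(2e² − 2), and in particular cov(X₂, Ŷ) ≠ cov(X₁, Ŷ). Hence the canonical correlation weight ratio α₂ᶜ/α₁ᶜ = cov(X₂, Ŷ)/cov(X₁, Ŷ) differs from the true weight ratio α₂/α₁ = 1 for the true weights α₁ = α₂ = 1/√2, so the Canonical Correlation estimator is not consistent in this example. -/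

import Mathlib

open MeasureTheory ProbabilityTheory
open scoped NNReal ENNReal

/-- `G` is the cumulative distribution function of the exponential distribution with
rate 1: `G(z) = 1 - exp(-z)` for `z ≥ 0` and `G(z) = 0` for `z < 0`. -/
noncomputable def G (z : ℝ) : ℝ := if 0 ≤ z then 1 - Real.exp (-z) else 0

section AuxLemmas
open Real Set Filter Topology


lemma measurable_G : Measurable G :=
  Measurable.ite measurableSet_Ici (by fun_prop) measurable_const

lemma G_nonneg (z : ℝ) : 0 ≤ G z := by
  unfold G; split_ifs with h
  · have := Real.exp_le_one_iff.mpr (by linarith : -z ≤ 0); linarith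
  · exact le_rfl

lemma hd_exp (b : ℝ) (x : ℝ) :
    HasDerivAt (fun y : ℝ => Real.exp (-(b*y))) (-b * Real.exp (-(b*x))) x := by
  have h := ((hasDerivAt_id x).const_mul (-b)).exp
  simp only [id_eq, mul_one, neg_mul] at h
  exact h.congr_deriv (by ring)

lemma exp_Ioi (b c : ℝ) (hb : 0 < b) :
    IntegrableOn (fun y => Real.exp (-(b*y))) (Set.Ioi c) ∧
    ∫ y in Set.Ioi c, Real.exp (-(b*y)) = Real.exp (-(b*c)) / b := by
  have hint : IntegrableOn (fun y => Real.exp (-(b*y))) (Set.Ioi c) := by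
    simpa [neg_mul] using exp_neg_integrableOn_Ioi c hb
  refine ⟨hint, ?_⟩
  have hderiv : ∀ x ∈ Set.Ioi c, HasDerivAt (fun y => -(Real.exp (-(b*y)) / b))
      (Real.exp (-(b*x))) x := by
    intro x _
    exact (((hd_exp b x).div_const b).neg).congr_deriv (by field_simp)
  have hlim : Tendsto (fun y => -(Real.exp (-(b*y)) / b)) atTop (𝓝 0) := by
    have h1 : Tendsto (fun y : ℝ => Real.exp (-(b*y))) atTop (𝓝 0) := by
      have := Real.tendsto_exp_neg_atTop_nhds_zero.comp (tendsto_id.const_mul_atTop hb)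
      simpa [Function.comp_def] using this
    simpa using (h1.div_const b).neg
  have hcont : ContinuousWithinAt (fun y => -(Real.exp (-(b*y)) / b)) (Set.Ici c) c :=
    ((by fun_prop : Continuous fun y : ℝ => -(Real.exp (-(b*y)) / b))).continuousWithinAt
  rw [integral_Ioi_of_hasDerivAt_of_tendsto hcont hderiv hint hlim]
  ring

lemma lin_exp_Ioi (b c : ℝ) (hb : 0 < b) (hc : 0 ≤ c) :
    IntegrableOn (fun y => y * Real.exp (-(b*y))) (Set.Ioi c) ∧
    ∫ y in Set.Ioi c, y * Real.exp (-(b*y)) = (b*c+1)/b^2 * Real.exp (-(b*c)) := by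
  have hderiv : ∀ x ∈ Set.Ioi c, HasDerivAt (fun y => -((y/b + 1/b^2) * Real.exp (-(b*y))))
      (x * Real.exp (-(b*x))) x := by
    intro x _
    have h1 : HasDerivAt (fun y : ℝ => y/b + 1/b^2) (1/b) x :=
      ((hasDerivAt_id x).div_const b).add_const (1/b^2)
    exact ((h1.mul (hd_exp b x)).neg).congr_deriv (by field_simp; ring)
  have hlim : Tendsto (fun y => -((y/b + 1/b^2) * Real.exp (-(b*y)))) atTop (𝓝 0) := by
    have h1 : Tendsto (fun y : ℝ => (b*y) * Real.exp (-(b*y))) atTop (𝓝 0) := by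
      have := (Real.tendsto_pow_mul_exp_neg_atTop_nhds_zero 1).comp
        (tendsto_id.const_mul_atTop hb)
      simpa [Function.comp_def] using this
    have h2 : Tendsto (fun y : ℝ => Real.exp (-(b*y))) atTop (𝓝 0) := by
      have := Real.tendsto_exp_neg_atTop_nhds_zero.comp (tendsto_id.const_mul_atTop hb)
      simpa [Function.comp_def] using this
    have h3 : Tendsto (fun y : ℝ => -((1/b^2) * ((b*y) * Real.exp (-(b*y)))
        + (1/b^2) * Real.exp (-(b*y)))) atTop (𝓝 (-((1/b^2) * 0 + (1/b^2) * 0))) :=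
      ((h1.const_mul _).add (h2.const_mul _)).neg
    have heq : (fun y : ℝ => -((y/b + 1/b^2) * Real.exp (-(b*y))))
        = fun y : ℝ => -((1/b^2) * ((b*y) * Real.exp (-(b*y))) + (1/b^2) * Real.exp (-(b*y))) := by
      funext y; field_simp
    rw [heq]
    simpa using h3
  have hcont : ContinuousWithinAt (fun y => -((y/b + 1/b^2) * Real.exp (-(b*y))))
      (Set.Ici c) c :=
    ((by fun_prop : Continuous fun y : ℝ => -((y/b + 1/b^2) * Real.exp (-(b*y))))).continuousWithinAt
  have hpos : ∀ x ∈ Set.Ioi c, 0 ≤ x * Real.exp (-(b*x)) := fun x hx =>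
    mul_nonneg (le_trans hc (le_of_lt hx)) (Real.exp_pos _).le
  have hint : IntegrableOn (fun y => y * Real.exp (-(b*y))) (Set.Ioi c) :=
    integrableOn_Ioi_deriv_of_nonneg hcont hderiv hpos hlim
  refine ⟨hint, ?_⟩
  rw [integral_Ioi_of_hasDerivAt_of_tendsto hcont hderiv hint hlim]
  field_simp
  ring

noncomputable def nnPDF : ℝ → ℝ≥0 := fun x => if 0 ≤ x then Real.toNNReal (Real.exp (-x)) else 0

lemma measurable_nnPDF : Measurable nnPDF := by
  unfold nnPDF
  exact Measurable.ite measurableSet_Ici (by fun_prop) measurable_const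

lemma expMeasure_eq_withDensity :
    expMeasure 1 = MeasureTheory.volume.withDensity (fun x => ((nnPDF x : ℝ≥0) : ℝ≥0∞)) := by
  rw [expMeasure, gammaMeasure]
  congr 1
  funext x
  have h0 : gammaPDF 1 1 x = exponentialPDF 1 x := rfl
  rw [h0, exponentialPDF_eq]
  unfold nnPDF
  split_ifs with h
  · rw [ENNReal.ofReal]; norm_num
  · simp

lemma nnPDF_smul (g : ℝ → ℝ) :
    (fun y => nnPDF y • g y) = Set.indicator (Set.Ici 0) (fun y => Real.exp (-y) * g y) := by
  funext y
  unfold nnPDF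
  by_cases h : 0 ≤ y
  · rw [if_pos h, Set.indicator_of_mem (show y ∈ Set.Ici (0:ℝ) from h)]
    simp [NNReal.smul_def, Real.coe_toNNReal _ (Real.exp_pos _).le]
  · rw [if_neg h, Set.indicator_of_notMem (show y ∉ Set.Ici (0:ℝ) from h)]
    simp

lemma expMeasure_smul (g : ℝ → ℝ) :
    (∫ y, g y ∂(expMeasure 1)) = ∫ y in Set.Ioi 0, Real.exp (-y) * g y := by
  rw [expMeasure_eq_withDensity, integral_withDensity_eq_integral_smul measurable_nnPDF]
  rw [nnPDF_smul, integral_indicator measurableSet_Ici, integral_Ici_eq_integral_Ioi]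

lemma expMeasure_integrable_iff (g : ℝ → ℝ) :
    Integrable g (expMeasure 1) ↔
      IntegrableOn (fun y => Real.exp (-y) * g y) (Set.Ioi 0) := by
  rw [expMeasure_eq_withDensity, integrable_withDensity_iff_integrable_smul measurable_nnPDF]
  rw [nnPDF_smul, integrable_indicator_iff measurableSet_Ici]
  exact integrableOn_Ici_iff_integrableOn_Ioi

lemma expMeasure_int (g q : ℝ → ℝ)
    (heq : ∀ y ∈ Set.Ioi (0:ℝ), Real.exp (-y) * g y = q y)
    (hq : IntegrableOn q (Set.Ioi 0)) :
    Integrable g (expMeasure 1) ∧ (∫ y, g y ∂(expMeasure 1)) = ∫ y in Set.Ioi 0, q y := by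
  constructor
  · rw [expMeasure_integrable_iff]
    exact hq.congr_fun (fun y hy => (heq y hy).symm) measurableSet_Ioi
  · rw [expMeasure_smul]
    exact setIntegral_congr_fun measurableSet_Ioi heq

-- indicator identities for the G(y-2) pieces
lemma G_shift1 (y : ℝ) : Real.exp (-y) * G (y-2)
    = Set.indicator (Set.Ici 2) (fun y => Real.exp (-(1*y)) - Real.exp 2 * Real.exp (-(2*y))) y := by
  unfold G
  by_cases h : (2:ℝ) ≤ y
  · rw [if_pos (by linarith : (0:ℝ) ≤ y - 2), Set.indicator_of_mem (show y ∈ Set.Ici (2:ℝ) from h)]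
    have h1 : Real.exp (-(y-2)) = Real.exp 2 * Real.exp (-(2*y)) * Real.exp y := by
      rw [← Real.exp_add, ← Real.exp_add]; ring_nf
    have h2 : Real.exp (-y) * Real.exp y = 1 := by rw [← Real.exp_add]; simp
    calc Real.exp (-y) * (1 - Real.exp (-(y-2)))
        = Real.exp (-y) - Real.exp 2 * Real.exp (-(2*y)) * (Real.exp (-y) * Real.exp y) := by
          rw [h1]; ring
      _ = Real.exp (-(1*y)) - Real.exp 2 * Real.exp (-(2*y)) := by rw [h2]; norm_num
  · rw [if_neg (by linarith : ¬ (0:ℝ) ≤ y - 2),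
      Set.indicator_of_notMem (show y ∉ Set.Ici (2:ℝ) from h)]
    ring

lemma G_shift2 (y : ℝ) : Real.exp (-y) * (y * G (y-2))
    = Set.indicator (Set.Ici 2) (fun y => y * Real.exp (-(1*y)) - Real.exp 2 * (y * Real.exp (-(2*y)))) y := by
  have h := G_shift1 y
  by_cases hm : (2:ℝ) ≤ y
  · rw [Set.indicator_of_mem (show y ∈ Set.Ici (2:ℝ) from hm)] at h ⊢
    calc Real.exp (-y) * (y * G (y-2)) = y * (Real.exp (-y) * G (y-2)) := by ring
      _ = y * (Real.exp (-(1*y)) - Real.exp 2 * Real.exp (-(2*y))) := by rw [h]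
      _ = _ := by ring
  · rw [Set.indicator_of_notMem (show y ∉ Set.Ici (2:ℝ) from hm)] at h ⊢
    have : Real.exp (-y) * G (y - 2) = 0 := h
    have hG : G (y - 2) = 0 := by
      rcases mul_eq_zero.mp this with h' | h'
      · exact absurd h' (Real.exp_ne_zero _)
      · exact h'
    rw [hG]; ring

-- integrals over Ioi 0 / Ioi 2 of indicator pieces
lemma ind1_integrableOn : IntegrableOn
    (Set.indicator (Set.Ici 2) (fun y => Real.exp (-(1*y)) - Real.exp 2 * Real.exp (-(2*y))))
    (Set.Ioi (0:ℝ)) := by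
  rw [IntegrableOn, integrable_indicator_iff measurableSet_Ici, IntegrableOn,
    Measure.restrict_restrict measurableSet_Ici,
    Set.inter_eq_left.mpr (fun y (hy : y ∈ Set.Ici (2:ℝ)) => (by simp at hy ⊢; linarith : y ∈ Set.Ioi (0:ℝ)))]
  have h1 := (exp_Ioi 1 2 one_pos).1
  have h2 := ((exp_Ioi 2 2 two_pos).1.const_mul (Real.exp 2))
  exact (integrableOn_Ici_iff_integrableOn_Ioi).mpr (h1.sub h2)

lemma ind1_integral : ∫ y in Set.Ioi (0:ℝ),
    Set.indicator (Set.Ici 2) (fun y => Real.exp (-(1*y)) - Real.exp 2 * Real.exp (-(2*y))) y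
    = Real.exp (-2) / 2 := by
  rw [setIntegral_indicator measurableSet_Ici,
    Set.inter_eq_right.mpr (fun y (hy : y ∈ Set.Ici (2:ℝ)) => (by simp at hy ⊢; linarith : y ∈ Set.Ioi (0:ℝ))),
    integral_Ici_eq_integral_Ioi]
  have h1 := (exp_Ioi 1 2 one_pos)
  have h2 := (exp_Ioi 2 2 two_pos)
  rw [integral_sub h1.1 (h2.1.const_mul (Real.exp 2)), h1.2,
    integral_const_mul, h2.2]
  have he : Real.exp 2 * Real.exp (-4) = Real.exp (-2) := by
    rw [← Real.exp_add]; norm_num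
  norm_num
  linear_combination (-1/2 : ℝ) * he

lemma ind2_integrableOn : IntegrableOn
    (Set.indicator (Set.Ici 2) (fun y => y * Real.exp (-(1*y)) - Real.exp 2 * (y * Real.exp (-(2*y)))))
    (Set.Ioi (0:ℝ)) := by
  rw [IntegrableOn, integrable_indicator_iff measurableSet_Ici, IntegrableOn,
    Measure.restrict_restrict measurableSet_Ici,
    Set.inter_eq_left.mpr (fun y (hy : y ∈ Set.Ici (2:ℝ)) => (by simp at hy ⊢; linarith : y ∈ Set.Ioi (0:ℝ)))]
  have h1 := (lin_exp_Ioi 1 2 one_pos (by norm_num)).1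
  have h2 := ((lin_exp_Ioi 2 2 two_pos (by norm_num)).1.const_mul (Real.exp 2))
  exact (integrableOn_Ici_iff_integrableOn_Ioi).mpr (h1.sub h2)

lemma ind2_integral : ∫ y in Set.Ioi (0:ℝ),
    Set.indicator (Set.Ici 2) (fun y => y * Real.exp (-(1*y)) - Real.exp 2 * (y * Real.exp (-(2*y)))) y
    = 7 * Real.exp (-2) / 4 := by
  rw [setIntegral_indicator measurableSet_Ici,
    Set.inter_eq_right.mpr (fun y (hy : y ∈ Set.Ici (2:ℝ)) => (by simp at hy ⊢; linarith : y ∈ Set.Ioi (0:ℝ))),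
    integral_Ici_eq_integral_Ioi]
  have h1 := (lin_exp_Ioi 1 2 one_pos (by norm_num))
  have h2 := (lin_exp_Ioi 2 2 two_pos (by norm_num))
  rw [integral_sub h1.1 (h2.1.const_mul (Real.exp 2)), h1.2,
    integral_const_mul, h2.2]
  have he : Real.exp 2 * Real.exp (-4) = Real.exp (-2) := by
    rw [← Real.exp_add]; norm_num
  norm_num
  linear_combination (-5/4 : ℝ) * he

lemma nuA : Integrable (fun y : ℝ => y) (expMeasure 1) ∧
    (∫ y, (y:ℝ) ∂(expMeasure 1)) = 1 := by
  have h := expMeasure_int (fun y => y) (fun y => y * Real.exp (-(1*y)))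
    (fun y _ => by show Real.exp (-y) * y = y * Real.exp (-(1*y)); rw [show -(1*y) = -y by ring]; ring) (lin_exp_Ioi 1 0 one_pos le_rfl).1
  refine ⟨h.1, ?_⟩
  rw [h.2, (lin_exp_Ioi 1 0 one_pos le_rfl).2]
  norm_num

lemma nuY1 : Integrable (fun y : ℝ => (G y + G (y+2))/2) (expMeasure 1) ∧
    (∫ y, (G y + G (y+2))/2 ∂(expMeasure 1)) = 3/4 - Real.exp (-2)/4 := by
  have hq : IntegrableOn (fun y => Real.exp (-(1*y)) - (1+Real.exp (-2))/2 * Real.exp (-(2*y)))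
      (Set.Ioi (0:ℝ)) :=
    (exp_Ioi 1 0 one_pos).1.sub ((exp_Ioi 2 0 two_pos).1.const_mul _)
  have h := expMeasure_int (fun y => (G y + G (y+2))/2)
    (fun y => Real.exp (-(1*y)) - (1+Real.exp (-2))/2 * Real.exp (-(2*y))) ?_ hq
  · refine ⟨h.1, ?_⟩
    rw [h.2, integral_sub (exp_Ioi 1 0 one_pos).1 ((exp_Ioi 2 0 two_pos).1.const_mul _),
      (exp_Ioi 1 0 one_pos).2, integral_const_mul, (exp_Ioi 2 0 two_pos).2]
    norm_num [Real.exp_zero]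
    ring
  · intro y hy
    simp only [G]
    rw [if_pos (le_of_lt hy), if_pos (by simp at hy; linarith : (0:ℝ) ≤ y + 2),
      show -(y+2) = -y + -2 by ring, Real.exp_add,
      show -(2*y) = -y + -y by ring, Real.exp_add, one_mul]
    ring

lemma nuY2 : Integrable (fun y : ℝ => (G (y-2) + G y)/2) (expMeasure 1) ∧
    (∫ y, (G (y-2) + G y)/2 ∂(expMeasure 1)) = 1/4 + Real.exp (-2)/4 := by
  have hq : IntegrableOn (fun y => (1/2) * Set.indicator (Set.Ici 2)
      (fun y => Real.exp (-(1*y)) - Real.exp 2 * Real.exp (-(2*y))) y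
      + (1/2)*(Real.exp (-(1*y)) - Real.exp (-(2*y)))) (Set.Ioi (0:ℝ)) :=
    (ind1_integrableOn.const_mul _).add
      (((exp_Ioi 1 0 one_pos).1.sub (exp_Ioi 2 0 two_pos).1).const_mul _)
  have ha : IntegrableOn (fun y => (1/2) * Set.indicator (Set.Ici 2)
      (fun y => Real.exp (-(1*y)) - Real.exp 2 * Real.exp (-(2*y))) y) (Set.Ioi (0:ℝ)) :=
    ind1_integrableOn.const_mul _
  have hb : IntegrableOn (fun y => (1/2)*(Real.exp (-(1*y)) - Real.exp (-(2*y))))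
      (Set.Ioi (0:ℝ)) :=
    ((exp_Ioi 1 0 one_pos).1.sub (exp_Ioi 2 0 two_pos).1).const_mul _
  have hc : IntegrableOn (fun y => Real.exp (-(1*y)) - Real.exp (-(2*y))) (Set.Ioi (0:ℝ)) :=
    (exp_Ioi 1 0 one_pos).1.sub (exp_Ioi 2 0 two_pos).1
  have h := expMeasure_int (fun y => (G (y-2) + G y)/2) _ ?_ hq
  · refine ⟨h.1, ?_⟩
    rw [h.2, integral_add ha hb,
      integral_const_mul, integral_const_mul, ind1_integral,
      integral_sub (exp_Ioi 1 0 one_pos).1 (exp_Ioi 2 0 two_pos).1,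
      (exp_Ioi 1 0 one_pos).2, (exp_Ioi 2 0 two_pos).2]
    norm_num [Real.exp_zero]
    ring
  · intro y hy
    have hsh := G_shift1 y
    have hgy : G y = 1 - Real.exp (-y) := by simp only [G]; rw [if_pos (le_of_lt hy)]
    calc Real.exp (-y) * ((G (y-2) + G y)/2)
        = (1/2)*(Real.exp (-y) * G (y-2)) + (1/2)*(Real.exp (-y) * G y) := by ring
      _ = _ := by
          rw [hsh, hgy, show -(2*y) = -y + -y by ring, Real.exp_add, one_mul]
          ring

lemma nuZ1 : Integrable (fun y : ℝ => y * ((G y + G (y+2))/2)) (expMeasure 1) ∧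
    (∫ y, y * ((G y + G (y+2))/2) ∂(expMeasure 1)) = 7/8 - Real.exp (-2)/8 := by
  have hq : IntegrableOn (fun y => y * Real.exp (-(1*y))
      - (1+Real.exp (-2))/2 * (y * Real.exp (-(2*y)))) (Set.Ioi (0:ℝ)) :=
    (lin_exp_Ioi 1 0 one_pos le_rfl).1.sub ((lin_exp_Ioi 2 0 two_pos le_rfl).1.const_mul _)
  have h := expMeasure_int (fun y => y * ((G y + G (y+2))/2)) _ ?_ hq
  · refine ⟨h.1, ?_⟩
    rw [h.2, integral_sub (lin_exp_Ioi 1 0 one_pos le_rfl).1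
        ((lin_exp_Ioi 2 0 two_pos le_rfl).1.const_mul _),
      (lin_exp_Ioi 1 0 one_pos le_rfl).2, integral_const_mul,
      (lin_exp_Ioi 2 0 two_pos le_rfl).2]
    norm_num [Real.exp_zero]
    ring
  · intro y hy
    simp only [G]
    rw [if_pos (le_of_lt hy), if_pos (by simp at hy; linarith : (0:ℝ) ≤ y + 2),
      show -(y+2) = -y + -2 by ring, Real.exp_add,
      show -(2*y) = -y + -y by ring, Real.exp_add, one_mul]
    ring

lemma nuZ2 : Integrable (fun y : ℝ => y * ((G (y-2) + G y)/2)) (expMeasure 1) ∧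
    (∫ y, y * ((G (y-2) + G y)/2) ∂(expMeasure 1)) = 3/8 + 7*Real.exp (-2)/8 := by
  have hq : IntegrableOn (fun y => (1/2) * Set.indicator (Set.Ici 2)
      (fun y => y * Real.exp (-(1*y)) - Real.exp 2 * (y * Real.exp (-(2*y)))) y
      + (1/2)*(y * Real.exp (-(1*y)) - y * Real.exp (-(2*y)))) (Set.Ioi (0:ℝ)) :=
    (ind2_integrableOn.const_mul _).add
      (((lin_exp_Ioi 1 0 one_pos le_rfl).1.sub (lin_exp_Ioi 2 0 two_pos le_rfl).1).const_mul _)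
  have ha : IntegrableOn (fun y => (1/2) * Set.indicator (Set.Ici 2)
      (fun y => y * Real.exp (-(1*y)) - Real.exp 2 * (y * Real.exp (-(2*y)))) y)
      (Set.Ioi (0:ℝ)) := ind2_integrableOn.const_mul _
  have hb : IntegrableOn (fun y => (1/2)*(y * Real.exp (-(1*y)) - y * Real.exp (-(2*y))))
      (Set.Ioi (0:ℝ)) :=
    ((lin_exp_Ioi 1 0 one_pos le_rfl).1.sub (lin_exp_Ioi 2 0 two_pos le_rfl).1).const_mul _
  have h := expMeasure_int (fun y => y * ((G (y-2) + G y)/2)) _ ?_ hq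
  · refine ⟨h.1, ?_⟩
    rw [h.2, integral_add ha hb,
      integral_const_mul, integral_const_mul, ind2_integral,
      integral_sub (lin_exp_Ioi 1 0 one_pos le_rfl).1 (lin_exp_Ioi 2 0 two_pos le_rfl).1,
      (lin_exp_Ioi 1 0 one_pos le_rfl).2, (lin_exp_Ioi 2 0 two_pos le_rfl).2]
    norm_num [Real.exp_zero]
    ring
  · intro y hy
    have hsh := G_shift2 y
    have hgy : G y = 1 - Real.exp (-y) := by simp only [G]; rw [if_pos (le_of_lt hy)]
    calc Real.exp (-y) * (y * ((G (y-2) + G y)/2))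
        = (1/2)*(Real.exp (-y) * (y * G (y-2))) + (1/2)*(y * (Real.exp (-y) * G y)) := by ring
      _ = _ := by
          rw [hsh, hgy, show -(2*y) = -y + -y by ring, Real.exp_add, one_mul]
          ring
lemma smul_prod'' (c : ℝ≥0∞) (hc : c ≠ ∞) (m : Measure ℝ) [IsFiniteMeasure m]
    (ν : Measure ℝ) [SigmaFinite ν] :
    (c • m).prod ν = c • (m.prod ν) := by
  haveI : IsFiniteMeasure (c • m) := m.smul_finite hc
  exact Measure.prod_eq fun s t hs ht => by simp [Measure.prod_prod, mul_assoc]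

end AuxLemmas

section Main
open Real Set Filter Topology

/-- With `X₁` Rademacher, `X₂` exponential(1) independent of `X₁`, `X̂ = (X₁ + X₂)/√2` and `Ŷ = F_X̂(X̂)`, the ratio `cov(X₂, Ŷ)/cov(X₁, Ŷ)` equals `(3 + e²)/(2e² − 2)`; in particular `cov(X₂, Ŷ) ≠ cov(X₁, Ŷ)`, so the canonical correlation weight ratio `α₂ᶜ/α₁ᶜ = cov(X₂, Ŷ)/cov(X₁, Ŷ)` differs from the true weight ratio `α₂/α₁ = (1/√2)/(1/√2) = 1`: Canonical Correlation is inconsistent in this example. -/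
theorem stmt_13 {Ω : Type*} [MeasurableSpace Ω] (μ : Measure Ω) [IsProbabilityMeasure μ]
    (X₁ X₂ : Ω → ℝ) (h1meas : Measurable X₁) (h2meas : Measurable X₂)
    (hX1 : μ.map X₁ = (1/2 : ℝ≥0∞) • Measure.dirac 1 + (1/2 : ℝ≥0∞) • Measure.dirac (-1))
    (hX2 : μ.map X₂ = expMeasure 1)
    (hind : IndepFun X₁ X₂ μ)
    (Xhat : Ω → ℝ) (hXhat : Xhat = fun ω => (X₁ ω + X₂ ω) / Real.sqrt 2)
    (Yhat : Ω → ℝ) (hYhat : Yhat = fun ω => cdf (μ.map Xhat) (Xhat ω)) :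
    ((∫ ω, X₂ ω * Yhat ω ∂μ) - (∫ ω, X₂ ω ∂μ) * (∫ ω, Yhat ω ∂μ)) / ((∫ ω, X₁ ω * Yhat ω ∂μ) - (∫ ω, X₁ ω ∂μ) * (∫ ω, Yhat ω ∂μ)) = (3 + Real.exp 2) / (2 * Real.exp 2 - 2) ∧ (∫ ω, X₂ ω * Yhat ω ∂μ) - (∫ ω, X₂ ω ∂μ) * (∫ ω, Yhat ω ∂μ) ≠ (∫ ω, X₁ ω * Yhat ω ∂μ) - (∫ ω, X₁ ω ∂μ) * (∫ ω, Yhat ω ∂μ) ∧ ((∫ ω, X₂ ω * Yhat ω ∂μ) - (∫ ω, X₂ ω ∂μ) * (∫ ω, Yhat ω ∂μ)) / ((∫ ω, X₁ ω * Yhat ω ∂μ) - (∫ ω, X₁ ω ∂μ) * (∫ ω, Yhat ω ∂μ)) ≠ (1 / Real.sqrt 2) / (1 / Real.sqrt 2) := by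
  haveI : IsProbabilityMeasure (expMeasure 1) := isProbabilityMeasure_expMeasure one_pos
  have hXhatm : Measurable Xhat := by rw [hXhat]; fun_prop
  have hpairm : Measurable (fun ω => (X₁ ω, X₂ ω)) := h1meas.prodMk h2meas
  have hprod : μ.map (fun ω => (X₁ ω, X₂ ω)) =
      (1/2 : ℝ≥0∞) • (expMeasure 1).map (Prod.mk (1:ℝ)) +
      (1/2 : ℝ≥0∞) • (expMeasure 1).map (Prod.mk (-1:ℝ)) := by
    rw [(indepFun_iff_map_prod_eq_prod_map_map h1meas.aemeasurable h2meas.aemeasurable).mp hind,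
      hX1, hX2, Measure.add_prod, smul_prod'' _ (by norm_num), smul_prod'' _ (by norm_num),
      Measure.dirac_prod, Measure.dirac_prod]
  -- reduction of integrals of functions of (X₁, X₂)
  have hred : ∀ f : ℝ × ℝ → ℝ, Measurable f →
      Integrable (fun y => f (1, y)) (expMeasure 1) →
      Integrable (fun y => f (-1, y)) (expMeasure 1) →
      (∫ ω, f (X₁ ω, X₂ ω) ∂μ)
        = ((∫ y, f (1, y) ∂(expMeasure 1)) + (∫ y, f (-1, y) ∂(expMeasure 1)))/2 := by
    intro f hf hi1 hi2
    have hm1 : Integrable f ((expMeasure 1).map (Prod.mk (1:ℝ))) :=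
      (integrable_map_measure hf.aestronglyMeasurable
        measurable_prodMk_left.aemeasurable).mpr hi1
    have hm2 : Integrable f ((expMeasure 1).map (Prod.mk (-1:ℝ))) :=
      (integrable_map_measure hf.aestronglyMeasurable
        measurable_prodMk_left.aemeasurable).mpr hi2
    rw [← integral_map hpairm.aemeasurable hf.aestronglyMeasurable, hprod,
      integral_add_measure (hm1.smul_measure (by norm_num)) (hm2.smul_measure (by norm_num)),
      integral_smul_measure, integral_smul_measure,
      integral_map measurable_prodMk_left.aemeasurable hf.aestronglyMeasurable,
      integral_map measurable_prodMk_left.aemeasurable hf.aestronglyMeasurable]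
    rw [show ((1:ℝ≥0∞)/2).toReal = (1:ℝ)/2 by simp [ENNReal.toReal_div]]
    simp only [smul_eq_mul]
    ring
  -- the cdf of Xhat
  have hIic : ∀ a : ℝ, expMeasure 1 (Iic a) = ENNReal.ofReal (G a) := by
    intro a
    rw [← ofReal_cdf (expMeasure 1) a]
    congr 1
    rw [cdf_expMeasure_eq one_pos]
    simp [G]
  have hcdf : ∀ x : ℝ, cdf (μ.map Xhat) x
      = (G (Real.sqrt 2 * x - 1) + G (Real.sqrt 2 * x + 1))/2 := by
    intro x
    haveI : IsProbabilityMeasure (μ.map Xhat) := Measure.isProbabilityMeasure_map hXhatm.aemeasurable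
    have hS : MeasurableSet {p : ℝ × ℝ | p.1 + p.2 ≤ Real.sqrt 2 * x} :=
      measurableSet_le (measurable_fst.add measurable_snd) measurable_const
    have hset : Xhat ⁻¹' (Iic x)
        = (fun ω => (X₁ ω, X₂ ω)) ⁻¹' {p : ℝ × ℝ | p.1 + p.2 ≤ Real.sqrt 2 * x} := by
      ext ω
      simp only [Set.mem_preimage, Set.mem_Iic, Set.mem_setOf_eq, hXhat]
      rw [div_le_iff₀ (by positivity : (0:ℝ) < Real.sqrt 2), mul_comm]
    have hpre1 : Prod.mk (1:ℝ) ⁻¹' {p : ℝ × ℝ | p.1 + p.2 ≤ Real.sqrt 2 * x}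
        = Iic (Real.sqrt 2 * x - 1) := by
      ext y; simp only [Set.mem_preimage, Set.mem_setOf_eq, Set.mem_Iic]; constructor <;>
        intro h <;> linarith
    have hpre2 : Prod.mk (-1:ℝ) ⁻¹' {p : ℝ × ℝ | p.1 + p.2 ≤ Real.sqrt 2 * x}
        = Iic (Real.sqrt 2 * x + 1) := by
      ext y; simp only [Set.mem_preimage, Set.mem_setOf_eq, Set.mem_Iic]; constructor <;>
        intro h <;> linarith
    rw [cdf_eq_real, measureReal_def, Measure.map_apply hXhatm measurableSet_Iic, hset,
      ← Measure.map_apply hpairm hS, hprod, Measure.add_apply, Measure.smul_apply,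
      Measure.smul_apply, Measure.map_apply measurable_prodMk_left hS,
      Measure.map_apply measurable_prodMk_left hS, hpre1, hpre2, hIic, hIic,
      smul_eq_mul, smul_eq_mul,
      ENNReal.toReal_add (ENNReal.mul_ne_top (by norm_num) ENNReal.ofReal_ne_top) (ENNReal.mul_ne_top (by norm_num) ENNReal.ofReal_ne_top), ENNReal.toReal_mul,
      ENNReal.toReal_mul, ENNReal.toReal_ofReal (G_nonneg _), ENNReal.toReal_ofReal (G_nonneg _),
      show ((1:ℝ≥0∞)/2).toReal = (1:ℝ)/2 by simp [ENNReal.toReal_div]]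
    ring
  have hsum : ∀ ω, Real.sqrt 2 * Xhat ω = X₁ ω + X₂ ω := by
    intro ω
    rw [hXhat]
    field_simp
  have hY : Yhat = fun ω => (G (X₁ ω + X₂ ω - 1) + G (X₁ ω + X₂ ω + 1))/2 := by
    funext ω
    simp only [hYhat]
    rw [hcdf (Xhat ω), hsum ω]
  -- the five integrals
  have hE1 : (∫ ω, X₁ ω ∂μ) = 0 := by
    have h := hred (fun p : ℝ × ℝ => p.1) measurable_fst
      (integrable_const 1) (integrable_const (-1))
    rw [show (∫ ω, X₁ ω ∂μ) = ∫ ω, (fun p : ℝ × ℝ => p.1) (X₁ ω, X₂ ω) ∂μ from rfl, h]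
    have e1 : (∫ y, (fun p : ℝ × ℝ => p.1) ((1:ℝ), y) ∂(expMeasure 1)) = 1 := by
      rw [show (fun y : ℝ => (fun p : ℝ × ℝ => p.1) ((1:ℝ), y)) = fun _ => (1:ℝ) from rfl]
      simp
    have e2 : (∫ y, (fun p : ℝ × ℝ => p.1) ((-1:ℝ), y) ∂(expMeasure 1)) = -1 := by
      rw [show (fun y : ℝ => (fun p : ℝ × ℝ => p.1) ((-1:ℝ), y)) = fun _ => (-1:ℝ) from rfl]
      simp
    rw [e1, e2]
    norm_num
  have hE2 : (∫ ω, X₂ ω ∂μ) = 1 := by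
    have h := hred (fun p : ℝ × ℝ => p.2) measurable_snd nuA.1 nuA.1
    rw [show (∫ ω, X₂ ω ∂μ) = ∫ ω, (fun p : ℝ × ℝ => p.2) (X₁ ω, X₂ ω) ∂μ from rfl, h]
    have e1 : (∫ y, (fun p : ℝ × ℝ => p.2) ((1:ℝ), y) ∂(expMeasure 1)) = 1 := nuA.2
    rw [e1]
    norm_num
  -- helper equalities for plugged-in arguments
  have harg1 : (fun y : ℝ => (G (1 + y - 1) + G (1 + y + 1))/2)
      = fun y : ℝ => (G y + G (y + 2))/2 := by
    funext y
    rw [show (1:ℝ) + y - 1 = y by ring, show (1:ℝ) + y + 1 = y + 2 by ring]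
  have harg2 : (fun y : ℝ => (G (-1 + y - 1) + G (-1 + y + 1))/2)
      = fun y : ℝ => (G (y - 2) + G y)/2 := by
    funext y
    rw [show (-1:ℝ) + y - 1 = y - 2 by ring, show (-1:ℝ) + y + 1 = y by ring]
  have hfm : Measurable (fun p : ℝ × ℝ => (G (p.1 + p.2 - 1) + G (p.1 + p.2 + 1))/2) :=
    ((measurable_G.comp ((measurable_fst.add measurable_snd).sub measurable_const)).add
      (measurable_G.comp ((measurable_fst.add measurable_snd).add measurable_const))).div_const 2
  have hEY : (∫ ω, Yhat ω ∂μ) = 1/2 := by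
    simp only [hY]
    have h := hred (fun p : ℝ × ℝ => (G (p.1 + p.2 - 1) + G (p.1 + p.2 + 1))/2) hfm
      (harg1 ▸ nuY1.1) (harg2 ▸ nuY2.1)
    rw [show (∫ ω, (G (X₁ ω + X₂ ω - 1) + G (X₁ ω + X₂ ω + 1))/2 ∂μ)
        = ∫ ω, (fun p : ℝ × ℝ => (G (p.1 + p.2 - 1) + G (p.1 + p.2 + 1))/2) (X₁ ω, X₂ ω) ∂μ
        from rfl, h]
    rw [show (∫ y, (fun p : ℝ × ℝ => (G (p.1 + p.2 - 1) + G (p.1 + p.2 + 1))/2) ((1:ℝ), y)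
        ∂(expMeasure 1)) = ∫ y, (G (1 + y - 1) + G (1 + y + 1))/2 ∂(expMeasure 1) from rfl,
      show (∫ y, (fun p : ℝ × ℝ => (G (p.1 + p.2 - 1) + G (p.1 + p.2 + 1))/2) ((-1:ℝ), y)
        ∂(expMeasure 1)) = ∫ y, (G (-1 + y - 1) + G (-1 + y + 1))/2 ∂(expMeasure 1) from rfl,
      show (∫ y, (G (1 + y - 1) + G (1 + y + 1))/2 ∂(expMeasure 1))
        = ∫ y, (G y + G (y + 2))/2 ∂(expMeasure 1) from congrArg _ harg1,
      show (∫ y, (G (-1 + y - 1) + G (-1 + y + 1))/2 ∂(expMeasure 1))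
        = ∫ y, (G (y - 2) + G y)/2 ∂(expMeasure 1) from congrArg _ harg2,
      nuY1.2, nuY2.2]
    ring
  have harg1m : (fun y : ℝ => (1:ℝ) * ((G (1 + y - 1) + G (1 + y + 1))/2))
      = fun y : ℝ => (G y + G (y + 2))/2 := by
    funext y
    rw [show (1:ℝ) + y - 1 = y by ring, show (1:ℝ) + y + 1 = y + 2 by ring, one_mul]
  have harg2m : (fun y : ℝ => (-1:ℝ) * ((G (-1 + y - 1) + G (-1 + y + 1))/2))
      = fun y : ℝ => -((G (y - 2) + G y)/2) := by
    funext y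
    rw [show (-1:ℝ) + y - 1 = y - 2 by ring, show (-1:ℝ) + y + 1 = y by ring]
    ring
  have hEXY1 : (∫ ω, X₁ ω * Yhat ω ∂μ) = 1/4 - Real.exp (-2)/4 := by
    simp only [hY]
    have h := hred (fun p : ℝ × ℝ => p.1 * ((G (p.1 + p.2 - 1) + G (p.1 + p.2 + 1))/2))
      (measurable_fst.mul hfm) (harg1m ▸ nuY1.1) (harg2m ▸ nuY2.1.neg)
    rw [show (∫ ω, X₁ ω * ((G (X₁ ω + X₂ ω - 1) + G (X₁ ω + X₂ ω + 1))/2) ∂μ)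
        = ∫ ω, (fun p : ℝ × ℝ => p.1 * ((G (p.1 + p.2 - 1) + G (p.1 + p.2 + 1))/2))
          (X₁ ω, X₂ ω) ∂μ from rfl, h]
    rw [show (∫ y, (fun p : ℝ × ℝ => p.1 * ((G (p.1 + p.2 - 1) + G (p.1 + p.2 + 1))/2))
        ((1:ℝ), y) ∂(expMeasure 1))
        = ∫ y, (G y + G (y + 2))/2 ∂(expMeasure 1) from congrArg _ harg1m,
      show (∫ y, (fun p : ℝ × ℝ => p.1 * ((G (p.1 + p.2 - 1) + G (p.1 + p.2 + 1))/2))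
        ((-1:ℝ), y) ∂(expMeasure 1))
        = ∫ y, -((G (y - 2) + G y)/2) ∂(expMeasure 1) from congrArg _ harg2m,
      integral_neg, nuY1.2, nuY2.2]
    ring
  have harg1z : (fun y : ℝ => y * ((G (1 + y - 1) + G (1 + y + 1))/2))
      = fun y : ℝ => y * ((G y + G (y + 2))/2) := by
    funext y
    rw [show (1:ℝ) + y - 1 = y by ring, show (1:ℝ) + y + 1 = y + 2 by ring]
  have harg2z : (fun y : ℝ => y * ((G (-1 + y - 1) + G (-1 + y + 1))/2))
      = fun y : ℝ => y * ((G (y - 2) + G y)/2) := by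
    funext y
    rw [show (-1:ℝ) + y - 1 = y - 2 by ring, show (-1:ℝ) + y + 1 = y by ring]
  have hEXY2 : (∫ ω, X₂ ω * Yhat ω ∂μ) = 5/8 + 3 * Real.exp (-2)/8 := by
    simp only [hY]
    have h := hred (fun p : ℝ × ℝ => p.2 * ((G (p.1 + p.2 - 1) + G (p.1 + p.2 + 1))/2))
      (measurable_snd.mul hfm) (harg1z ▸ nuZ1.1) (harg2z ▸ nuZ2.1)
    rw [show (∫ ω, X₂ ω * ((G (X₁ ω + X₂ ω - 1) + G (X₁ ω + X₂ ω + 1))/2) ∂μ)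
        = ∫ ω, (fun p : ℝ × ℝ => p.2 * ((G (p.1 + p.2 - 1) + G (p.1 + p.2 + 1))/2))
          (X₁ ω, X₂ ω) ∂μ from rfl, h]
    rw [show (∫ y, (fun p : ℝ × ℝ => p.2 * ((G (p.1 + p.2 - 1) + G (p.1 + p.2 + 1))/2))
        ((1:ℝ), y) ∂(expMeasure 1))
        = ∫ y, y * ((G y + G (y + 2))/2) ∂(expMeasure 1) from congrArg _ harg1z,
      show (∫ y, (fun p : ℝ × ℝ => p.2 * ((G (p.1 + p.2 - 1) + G (p.1 + p.2 + 1))/2))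
        ((-1:ℝ), y) ∂(expMeasure 1))
        = ∫ y, y * ((G (y - 2) + G y)/2) ∂(expMeasure 1) from congrArg _ harg2z,
      nuZ1.2, nuZ2.2]
    ring
  -- final arithmetic
  rw [hE1, hE2, hEY, hEXY1, hEXY2]
  have hE : Real.exp (-2) * Real.exp 2 = 1 := by rw [← Real.exp_add]; norm_num
  have h2 : Real.exp 2 = Real.exp 1 * Real.exp 1 := by rw [← Real.exp_add]; norm_num
  have h7 : (7:ℝ) < Real.exp 2 := by nlinarith [Real.exp_one_gt_d9]
  have hEpos : 0 < Real.exp (-2) := Real.exp_pos _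
  have hElt : Real.exp (-2) < 1/7 := by nlinarith
  refine ⟨?_, ?_, ?_⟩
  · rw [div_eq_div_iff (by nlinarith) (by nlinarith)]
    nlinarith [hE]
  · intro h
    nlinarith
  · have hone : (1 / Real.sqrt 2) / (1 / Real.sqrt 2) = 1 := by
      have h0 : (0:ℝ) < 1 / Real.sqrt 2 := by positivity
      exact div_self (ne_of_gt h0)
    rw [hone]
    intro h
    rw [div_eq_one_iff_eq (by nlinarith)] at h
    nlinarith

end Main
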